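/- arXiv:2412.12946 — 6 statements merged into one kernel-verified Lean document; each statement's English description precedes it below -/
import Mathlib

section
/- Let z : ℝ × ℝ → ℂ and m : ℝ × ℝ → ℝ be smooth functions. Then the pair (z, m) satisfies the Yajima–Oikawa system ∂ₜz = i(∂ₓₓz − m·z), ∂ₜm = 2·∂ₓ(|z|²) if and only if for every λ ∈ ℂ the zero-curvature equation ∂ₜU − ∂ₓV + U·V − V·U = 0 holds identically on ℝ × ℝ, where U and V are the Lax matrices built from λ, z, m. -/
open Matrix Complex

noncomputable section

/-- Partial derivative in the first (spatial) variable. -/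
def pdx (f : ℝ × ℝ → ℂ) (p : ℝ × ℝ) : ℂ := deriv (fun s => f (s, p.2)) p.1

/-- Partial derivative in the second (time) variable. -/
def pdt (f : ℝ × ℝ → ℂ) (p : ℝ × ℝ) : ℂ := deriv (fun s => f (p.1, s)) p.2

/-- The spatial Lax matrix of the Yajima–Oikawa system. -/
def LaxU (lam : ℂ) (z : ℝ × ℝ → ℂ) (m : ℝ × ℝ → ℝ) (p : ℝ × ℝ) :
    Matrix (Fin 3) (Fin 3) ℂ :=
  !![lam, 0, 1;
     Complex.I * z p, 0, 0;
     (m p : ℂ), (starRingEnd ℂ) (z p), -lam]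

/-- The temporal Lax matrix of the Yajima–Oikawa system. -/
def LaxV (lam : ℂ) (z : ℝ × ℝ → ℂ) (p : ℝ × ℝ) :
    Matrix (Fin 3) (Fin 3) ℂ :=
  !![-(1/3) * Complex.I * lam ^ 2, -Complex.I * (starRingEnd ℂ) (z p), 0;
     lam * z p - pdx z p, (2/3) * Complex.I * lam ^ 2, z p;
     ((‖z p‖) ^ 2 : ℝ),
       Complex.I * (lam * (starRingEnd ℂ) (z p) - pdx (fun q => (starRingEnd ℂ) (z q)) p),
       -(1/3) * Complex.I * lam ^ 2]

lemma hasDerivAt_pdx {f : ℝ × ℝ → ℂ} (hf : ContDiff ℝ (⊤ : ℕ∞) f) (p : ℝ × ℝ) :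
    HasDerivAt (fun s => f (s, p.2)) (pdx f p) p.1 := by
  have h : DifferentiableAt ℝ (fun s => f (s, p.2)) p.1 :=
    (hf.differentiable (by simp) (p.1, p.2)).comp p.1
      (differentiableAt_id.prodMk (differentiableAt_const _))
  simpa [pdx] using h.hasDerivAt

lemma hasDerivAt_pdt {f : ℝ × ℝ → ℂ} (hf : ContDiff ℝ (⊤ : ℕ∞) f) (p : ℝ × ℝ) :
    HasDerivAt (fun s => f (p.1, s)) (pdt f p) p.2 := by
  have h : DifferentiableAt ℝ (fun s => f (p.1, s)) p.2 :=
    (hf.differentiable (by simp) (p.1, p.2)).comp p.2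
      ((differentiableAt_const _).prodMk differentiableAt_id)
  simpa [pdt] using h.hasDerivAt

lemma contDiff_pdx {f : ℝ × ℝ → ℂ} (hf : ContDiff ℝ (⊤ : ℕ∞) f) : ContDiff ℝ (⊤ : ℕ∞) (pdx f) := by
  have h1 : pdx f = fun q => fderiv ℝ f q (1, 0) := by
    funext q
    exact ((hf.differentiable (by simp) q).hasFDerivAt.comp_hasDerivAt q.1
      ((hasDerivAt_id q.1).prodMk (hasDerivAt_const q.1 q.2))).deriv
  rw [h1]
  exact (hf.fderiv_right (by simp)).clm_apply contDiff_const
lemma yoKey (z : ℝ × ℝ → ℂ) (m : ℝ × ℝ → ℝ)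
    (hz : ContDiff ℝ (⊤ : ℕ∞) z) (hm : ContDiff ℝ (⊤ : ℕ∞) m) (lam : ℂ) (p : ℝ × ℝ) :
        (Matrix.of fun i j => pdt (fun q => LaxU lam z m q i j) p)
          - (Matrix.of fun i j => pdx (fun q => LaxV lam z q i j) p)
          + LaxU lam z m p * LaxV lam z p - LaxV lam z p * LaxU lam z m p
        = !![0, 0, 0;
             Complex.I * (pdt z p - Complex.I * (pdx (pdx z) p - (m p : ℂ) * z p)), 0, 0;
             ((deriv (fun s => m (p.1, s)) p.2
                - 2 * deriv (fun s => (‖z (s, p.2)‖) ^ 2) p.1 : ℝ) : ℂ),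
               (starRingEnd ℂ) (pdt z p - Complex.I * (pdx (pdx z) p - (m p : ℂ) * z p)), 0] := by
  have hz1 : HasDerivAt (fun s => z (s, p.2)) (pdx z p) p.1 := hasDerivAt_pdx hz p
  have hz2 : HasDerivAt (fun s => z (p.1, s)) (pdt z p) p.2 := hasDerivAt_pdt hz p
  have hzz : HasDerivAt (fun s => pdx z (s, p.2)) (pdx (pdx z) p) p.1 :=
    hasDerivAt_pdx (contDiff_pdx hz) p
  have hs : HasDerivAt (fun s => (starRingEnd ℂ) (z (s, p.2))) ((starRingEnd ℂ) (pdx z p)) p.1 :=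
    hz1.star
  have hs2 : HasDerivAt (fun s => (starRingEnd ℂ) (pdx z (s, p.2)))
      ((starRingEnd ℂ) (pdx (pdx z) p)) p.1 := hzz.star
  have hs3 : HasDerivAt (fun s => (starRingEnd ℂ) (z (p.1, s))) ((starRingEnd ℂ) (pdt z p)) p.2 :=
    hz2.star
  have hmdiff : DifferentiableAt ℝ (fun s => m (p.1, s)) p.2 :=
    (hm.differentiable (by simp) (p.1, p.2)).comp p.2
      ((differentiableAt_const _).prodMk differentiableAt_id)
  have ht0 : ∀ c : ℂ, pdt (fun _ : ℝ × ℝ => c) p = 0 := fun c => by simp [pdt]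
  have hx0 : ∀ c : ℂ, pdx (fun _ : ℝ × ℝ => c) p = 0 := fun c => by simp [pdx]
  have habs : ∀ q : ℝ × ℝ, ((‖z q‖ ^ 2 : ℝ) : ℂ) = z q * (starRingEnd ℂ) (z q) :=
    fun q => by rw [Complex.sq_norm]; exact (Complex.mul_conj _).symm
  have hstar : ∀ q : ℝ × ℝ, pdx (fun q => (starRingEnd ℂ) (z q)) q = (starRingEnd ℂ) (pdx z q) :=
    fun q => by
      have h : HasDerivAt (fun s => (starRingEnd ℂ) (z (s, q.2)))
          ((starRingEnd ℂ) (pdx z q)) q.1 := (hasDerivAt_pdx hz q).star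
      simpa [pdx] using h.deriv
  have hd1 : pdt (fun q => Complex.I * z q) p = Complex.I * pdt z p := by
    simpa [pdt] using (hz2.const_mul Complex.I).deriv
  have hd2 : pdt (fun q => ((m q : ℝ) : ℂ)) p = ((deriv (fun s => m (p.1, s)) p.2 : ℝ) : ℂ) := by
    simpa [pdt] using (hmdiff.hasDerivAt.ofReal_comp).deriv
  have hd3 : pdt (fun q => (starRingEnd ℂ) (z q)) p = (starRingEnd ℂ) (pdt z p) := by
    simpa [pdt] using hs3.deriv
  have hx1 : pdx (fun q => -Complex.I * (starRingEnd ℂ) (z q)) p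
      = -Complex.I * (starRingEnd ℂ) (pdx z p) := by
    simpa [pdx] using (hs.const_mul (-Complex.I)).deriv
  have hx2 : pdx (fun q => lam * z q - pdx z q) p = lam * pdx z p - pdx (pdx z) p := by
    exact ((hz1.const_mul lam).sub hzz).deriv
  have hprod : HasDerivAt (fun s => z (s, p.2) * (starRingEnd ℂ) (z (s, p.2)))
      (pdx z p * (starRingEnd ℂ) (z p) + z p * (starRingEnd ℂ) (pdx z p)) p.1 := hz1.mul hs
  have hx4 : pdx (fun q => z q * (starRingEnd ℂ) (z q)) p
      = pdx z p * (starRingEnd ℂ) (z p) + z p * (starRingEnd ℂ) (pdx z p) := by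
    simpa [pdx] using hprod.deriv
  have hx5 : pdx (fun q => Complex.I * (lam * (starRingEnd ℂ) (z q) - (starRingEnd ℂ) (pdx z q))) p
      = Complex.I * (lam * (starRingEnd ℂ) (pdx z p) - (starRingEnd ℂ) (pdx (pdx z) p)) := by
    simpa [pdx] using (((hs.const_mul lam).sub hs2).const_mul Complex.I).deriv
  have hfn : ∀ s : ℝ, ‖z (s, p.2)‖ ^ 2
      = (z (s, p.2) * (starRingEnd ℂ) (z (s, p.2))).re := fun s => by
    rw [Complex.mul_conj, Complex.sq_norm]; simp
  have hre : HasDerivAt (fun s => ‖z (s, p.2)‖ ^ 2)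
      ((pdx z p * (starRingEnd ℂ) (z p) + z p * (starRingEnd ℂ) (pdx z p)).re) p.1 := by
    have h := Complex.reCLM.hasFDerivAt.comp_hasDerivAt p.1 hprod
    simp only [Function.comp_def, Complex.reCLM_apply] at h
    simp only [hfn]
    exact h
  have habs2C : ((deriv (fun s => ‖z (s, p.2)‖ ^ 2) p.1 : ℝ) : ℂ)
      = pdx z p * (starRingEnd ℂ) (z p) + z p * (starRingEnd ℂ) (pdx z p) := by
    rw [hre.deriv]
    refine Complex.conj_eq_iff_re.mp ?_
    simp only [_root_.map_add, _root_.map_mul, Complex.conj_conj]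
    ring
  ext i j
  fin_cases i <;> fin_cases j
  all_goals
    simp only [LaxU, LaxV, Matrix.sub_apply, Matrix.add_apply, Matrix.mul_apply,
      Matrix.of_apply, Fin.sum_univ_three, Fin.isValue, Matrix.cons_val', Matrix.cons_val_zero,
      Matrix.cons_val_one, Matrix.head_cons, Matrix.empty_val', Matrix.cons_val_fin_one,
      Matrix.head_fin_const, Matrix.cons_val_two, Matrix.tail_cons, Fin.zero_eta, Fin.mk_one,
      Fin.reduceFinMk]
  all_goals try simp only [hstar]
  all_goals try simp only [ht0, hx0, habs, hd1, hd2, hd3, hx1, hx2, hx4, hx5, habs2C,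
      Complex.ofReal_sub, Complex.ofReal_mul, Complex.ofReal_ofNat, _root_.map_sub, _root_.map_mul,
      Complex.conj_I, Complex.conj_ofReal]
  all_goals try ring_nf
  all_goals try simp only [Complex.I_sq]
  all_goals try ring

/-- The pair `(z, m)` satisfies the Yajima–Oikawa system iff for every `λ` the
zero-curvature equation `∂ₜU − ∂ₓV + U·V − V·U = 0` holds identically. -/
theorem yoSystem_iff_zeroCurvature (z : ℝ × ℝ → ℂ) (m : ℝ × ℝ → ℝ)
    (hz : ContDiff ℝ (⊤ : ℕ∞) z) (hm : ContDiff ℝ (⊤ : ℕ∞) m) :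
    ((∀ p : ℝ × ℝ,
        pdt z p = Complex.I * (pdx (pdx z) p - (m p : ℂ) * z p) ∧
        deriv (fun s => m (p.1, s)) p.2
          = 2 * deriv (fun s => (‖z (s, p.2)‖) ^ 2) p.1)
      ↔
      (∀ lam : ℂ, ∀ p : ℝ × ℝ,
        (Matrix.of fun i j => pdt (fun q => LaxU lam z m q i j) p)
          - (Matrix.of fun i j => pdx (fun q => LaxV lam z q i j) p)
          + LaxU lam z m p * LaxV lam z p - LaxV lam z p * LaxU lam z m p = 0)) := by

  constructor
  · intro h lam p
    rw [yoKey z m hz hm lam p]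
    obtain ⟨h1, h2⟩ := h p
    have e1 : pdt z p - Complex.I * (pdx (pdx z) p - (m p : ℂ) * z p) = 0 := by
      rw [h1]; ring
    have e2 : deriv (fun s => m (p.1, s)) p.2
        - 2 * deriv (fun s => (‖z (s, p.2)‖) ^ 2) p.1 = 0 := by
      rw [h2]; ring
    rw [e1, e2]
    ext i j
    fin_cases i <;> fin_cases j <;> simp [Matrix.vecHead, Matrix.vecTail]
  · intro h p
    have h0 := h 0 p
    rw [yoKey z m hz hm 0 p] at h0
    constructor
    · have e := congrFun (congrFun h0 1) 0
      simp [Complex.I_ne_zero, sub_eq_zero] at e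
      exact e
    · have e := congrFun (congrFun h0 2) 0
      simp [Complex.ofReal_eq_zero, sub_eq_zero] at e
      exact Complex.ofReal_injective (by rw [Complex.ofReal_mul, Complex.ofReal_ofNat]; exact e)

end
end

section
/- Let a, b, k, Λ, λ be real numbers with a > 0 and b + k² + Λ = 0. Define the 3×3 complex matrices (rows listed in order) A₁ = [[λ, 0, 1], [i·a, i·k, 0], [b, a, −λ]] and A₂ = [[−(1/3)·i·λ², −i·a, 0], [a·(λ + i·k), (2/3)·i·λ² − i·Λ, a], [a², a·(k + i·λ), −(1/3)·i·λ²]]. Then for μ, ν ∈ ℂ, there exists a nonzero vector r ∈ ℂ³ with A₁·r = i·μ·r and A₂·r = i·ν·r if and only if (μ² + b + λ²)·(μ − k) + a² = 0 and ν = μ² − k² − Λ + (2/3)·λ². -/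
open Matrix Complex
noncomputable section

/-- Existence of a common eigenvector for the separated plane-wave Lax matrices
is equivalent to the algebraic conditions on `μ` and `ν`. -/
theorem commonEigenvector_iff (a b k Λ lam : ℝ) (ha : 0 < a)
    (hdisp : b + k ^ 2 + Λ = 0) (μ ν : ℂ)
    (A₁ A₂ : Matrix (Fin 3) (Fin 3) ℂ)
    (hA₁ : A₁ = !![(lam : ℂ), 0, 1;
                   Complex.I * a, Complex.I * k, 0;
                   (b : ℂ), (a : ℂ), -(lam : ℂ)])
    (hA₂ : A₂ = !![-(1/3) * Complex.I * (lam : ℂ) ^ 2, -Complex.I * (a : ℂ), 0;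
                   (a : ℂ) * ((lam : ℂ) + Complex.I * k),
                     (2/3) * Complex.I * (lam : ℂ) ^ 2 - Complex.I * (Λ : ℂ), (a : ℂ);
                   (a : ℂ) ^ 2, (a : ℂ) * ((k : ℂ) + Complex.I * lam),
                     -(1/3) * Complex.I * (lam : ℂ) ^ 2]) :
    ((∃ r : Fin 3 → ℂ, r ≠ 0 ∧
        A₁.mulVec r = (Complex.I * μ) • r ∧ A₂.mulVec r = (Complex.I * ν) • r)
      ↔ ((μ ^ 2 + (b : ℂ) + (lam : ℂ) ^ 2) * (μ - (k : ℂ)) + (a : ℂ) ^ 2 = 0 ∧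
          ν = μ ^ 2 - (k : ℂ) ^ 2 - (Λ : ℂ) + (2/3) * (lam : ℂ) ^ 2)) := by
  subst hA₁ hA₂
  have ha' : (a : ℂ) ≠ 0 := by exact_mod_cast ha.ne'
  have hb : (b : ℂ) = -(k : ℂ) ^ 2 - (Λ : ℂ) := by
    have h := congrArg (Complex.ofReal) hdisp
    push_cast at h; linear_combination h
  constructor
  · rintro ⟨r, hr, h1, h2⟩
    have e10 := congrFun h1 0
    have e11 := congrFun h1 1
    have e12 := congrFun h1 2
    have e20 := congrFun h2 0
    simp [Matrix.mulVec, dotProduct, Fin.sum_univ_three, Pi.smul_apply,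
      smul_eq_mul] at e10 e11 e12 e20
    -- r 2 in terms of r 0
    have hr2 : r 2 = (Complex.I * μ - lam) * r 0 := by linear_combination e10
    -- a * r 1 in terms of r 0
    have hr1 : (a : ℂ) * r 1 = -(μ ^ 2 + (lam:ℂ) ^ 2 + b) * r 0 := by
      have := Complex.I_sq
      linear_combination e12 + (Complex.I * μ + lam) * hr2 + μ ^ 2 * r 0 * Complex.I_sq
    have hr0 : r 0 ≠ 0 := by
      intro h0
      apply hr
      have h1' : r 1 = 0 := by
        have := hr1; rw [h0, mul_zero] at this
        exact (mul_eq_zero.mp this).resolve_left ha'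
      have h2' : r 2 = 0 := by rw [hr2, h0, mul_zero]
      funext i; fin_cases i <;> assumption
    constructor
    · have key : ((μ ^ 2 + (b : ℂ) + (lam : ℂ) ^ 2) * (μ - (k : ℂ)) + (a : ℂ) ^ 2) * r 0 = 0 := by
        linear_combination (a:ℂ) * e11 * (-Complex.I) + (μ - k) * hr1 + (a:ℂ)^2 * r 0 * Complex.I_sq - (μ - (k:ℂ)) * (a:ℂ) * r 1 * Complex.I_sq
      exact (mul_eq_zero.mp key).resolve_right hr0
    · have key : (ν - (μ ^ 2 - (k : ℂ) ^ 2 - (Λ : ℂ) + (2/3) * (lam : ℂ) ^ 2)) * (Complex.I * r 0) = 0 := by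
        linear_combination -e20 - Complex.I * hr1 + r 0 * Complex.I * hb
      have := (mul_eq_zero.mp key).resolve_right (by
        exact mul_ne_zero Complex.I_ne_zero hr0)
      linear_combination this
  · rintro ⟨hc, hν⟩
    refine ⟨![μ - k, (a : ℂ), (Complex.I * μ - lam) * (μ - k)], ?_, ?_, ?_⟩
    · intro h
      have := congrFun h 1
      simp at this
      exact ha.ne' this
    · funext i
      fin_cases i
      · simp [Matrix.mulVec, dotProduct, Fin.sum_univ_three, smul_eq_mul]
        ring
      · simp [Matrix.mulVec, dotProduct, Fin.sum_univ_three, smul_eq_mul]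
        ring
      · simp [Matrix.mulVec, dotProduct, Fin.sum_univ_three, smul_eq_mul]
        linear_combination hc - μ ^ 2 * (μ - (k:ℂ)) * Complex.I_sq
    · subst hν
      funext i
      fin_cases i
      · simp [Matrix.mulVec, dotProduct, Fin.sum_univ_three, smul_eq_mul]
        linear_combination -Complex.I * hc + Complex.I * (μ - (k:ℂ)) * hb
      · simp [Matrix.mulVec, dotProduct, Fin.sum_univ_three, smul_eq_mul]
        ring
      · simp [Matrix.mulVec, dotProduct, Fin.sum_univ_three, smul_eq_mul]
        linear_combination (-Complex.I * (Complex.I * μ - (lam:ℂ))) * hc + (a:ℂ)^2 * μ * Complex.I_sq + (μ - (k:ℂ)) * Complex.I * (Complex.I * μ - (lam:ℂ)) * hb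

end
end

section
/- Let a, b, k, Λ, λ be real numbers with a > 0 and b + k² + Λ = 0, and let N(x,t) = k·x − Λ·t, z(x,t) = a·exp(−i·N(x,t)), m(x,t) = b. Let μ, ν ∈ ℂ and let r ∈ ℂ³ be a nonzero common eigenvector of the matrices A₁ = [[λ, 0, 1], [i·a, i·k, 0], [b, a, −λ]] and A₂ = [[−(1/3)·i·λ², −i·a, 0], [a·(λ + i·k), (2/3)·i·λ² − i·Λ, a], [a², a·(k + i·λ), −(1/3)·i·λ²]] with A₁·r = i·μ·r and A₂·r = i·ν·r. Let P(x,t) = diag(1, exp(−i·N(x,t)), 1). Then φ(x,t) := exp(i·(μ·x + ν·t))·P(x,t)·r satisfies ∂ₓφ = U·φ and ∂ₜφ = V·φ, where U and V are the Lax matrices built from λ and this plane wave pair (z, m). -/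
open Matrix Complex

noncomputable section

/-
The diagonal gauge `P = diag(1, e^{-iN}, 1)` strips the phase of the plane wave from the Lax
matrices: `U P = P A₁ + ∂ₓP` and `V P = P A₂ + ∂ₜP`. Hence for `φ = e^{i(μx+νt)} P r` one gets
`∂ₓφ = e^{i(μx+νt)} (P A₁ + ∂ₓP) r = U φ`, since `A₁ r = iμ r`, and likewise in `t`.
-/

open ComplexConjugate

section Gauge

variable {n : Type*} [Fintype n] [DecidableEq n]

theorem hasDerivAt_cexp_smul_diagonal_mulVec {g : ℝ → ℂ} {c : ℂ} {d : ℝ → n → ℂ}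
    {d' : n → ℂ} {x : ℝ} (hg : HasDerivAt g c x) (hd : ∀ i, HasDerivAt (fun s => d s i) (d' i) x)
    {A L : Matrix n n ℂ} {r : n → ℂ} (hr : A *ᵥ r = c • r)
    (hL : L * diagonal (d x) = diagonal (d x) * A + diagonal d') (i : n) :
    HasDerivAt (fun s => (cexp (g s) • (diagonal (d s) *ᵥ r)) i)
      ((L *ᵥ (cexp (g x) • (diagonal (d x) *ᵥ r))) i) x := by
  have hLφ : L *ᵥ (cexp (g x) • (diagonal (d x) *ᵥ r))
      = cexp (g x) • (diagonal (d x) *ᵥ (c • r) + diagonal d' *ᵥ r) := by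
    rw [mulVec_smul, mulVec_mulVec, hL, add_mulVec, ← mulVec_mulVec, hr]
  have hφi : (fun s => (cexp (g s) • (diagonal (d s) *ᵥ r)) i)
      = fun s => cexp (g s) * (d s i * r i) := by
    simp only [Pi.smul_apply, mulVec_diagonal, smul_eq_mul]
  rw [hLφ, hφi]
  refine (hg.cexp.fun_mul ((hd i).mul_const (r i))).congr_deriv ?_
  simp only [Pi.smul_apply, Pi.add_apply, mulVec_diagonal, smul_eq_mul]
  ring

end Gauge

theorem hasDerivAt_ofReal_const_mul (c : ℂ) (x : ℝ) : HasDerivAt (fun s : ℝ => c * s) c x := by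
  simpa using (hasDerivAt_id x).ofReal_comp.const_mul c

theorem hasDerivAt_cexp_mul_ofReal {f : ℝ → ℝ} {f' x : ℝ} (hf : HasDerivAt f f' x) (c : ℂ) :
    HasDerivAt (fun s => cexp (c * f s)) (c * f' * cexp (c * f x)) x := by
  simpa [mul_comm] using (hf.ofReal_comp.const_mul c).cexp

def planeWaveA₁ (a b k lam : ℝ) : Matrix (Fin 3) (Fin 3) ℂ :=
  !![(lam : ℂ), 0, 1;
     I * a, I * k, 0;
     (b : ℂ), (a : ℂ), -(lam : ℂ)]

def planeWaveA₂ (a k Λ lam : ℝ) : Matrix (Fin 3) (Fin 3) ℂ :=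
  !![-(1/3) * I * (lam : ℂ) ^ 2, -I * (a : ℂ), 0;
     (a : ℂ) * ((lam : ℂ) + I * k),
       (2/3) * I * (lam : ℂ) ^ 2 - I * (Λ : ℂ), (a : ℂ);
     (a : ℂ) ^ 2, (a : ℂ) * ((k : ℂ) + I * lam),
       -(1/3) * I * (lam : ℂ) ^ 2]

theorem laxU_mul_diagonal {lam a b k : ℝ} {z : ℝ × ℝ → ℂ} {m : ℝ × ℝ → ℝ} {p : ℝ × ℝ} {E : ℂ}
    (hz : z p = a * E) (hm : m p = b) (hE : ‖E‖ = 1) :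
    LaxU lam z m p * diagonal ![1, E, 1]
      = diagonal ![1, E, 1] * planeWaveA₁ a b k lam + diagonal ![0, -I * k * E, 0] := by
  have hE₀ : E ≠ 0 := norm_ne_zero_iff.mp (hE ▸ one_ne_zero)
  ext i j
  fin_cases i <;> fin_cases j <;>
    simp [LaxU, planeWaveA₁, hz, hm, ← Complex.inv_eq_conj hE, Matrix.mul_apply, Fin.sum_univ_three]
  all_goals field_simp
  all_goals ring

theorem laxV_mul_diagonal {lam a k Λ : ℝ} {z : ℝ × ℝ → ℂ} {p : ℝ × ℝ} {E : ℂ}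
    (hz : z p = a * E) (hzx : pdx z p = -I * k * z p)
    (hzcx : pdx (fun q => conj (z q)) p = I * k * conj (z p)) (hE : ‖E‖ = 1) :
    LaxV lam z p * diagonal ![1, E, 1]
      = diagonal ![1, E, 1] * planeWaveA₂ a k Λ lam + diagonal ![0, I * Λ * E, 0] := by
  have hE₀ : E ≠ 0 := norm_ne_zero_iff.mp (hE ▸ one_ne_zero)
  ext i j
  fin_cases i <;> fin_cases j <;>
    simp [LaxV, planeWaveA₂, hzx, hzcx, hz, hE, ← Complex.inv_eq_conj hE, Matrix.mul_apply,
      Fin.sum_univ_three, mul_sub, ← mul_assoc, I_mul_I]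
  all_goals field_simp
  all_goals ring

theorem hasDerivAt_vecCons_one {e : ℝ → ℂ} {e' : ℂ} {x : ℝ} (he : HasDerivAt e e' x) (i : Fin 3) :
    HasDerivAt (fun s => ![1, e s, 1] i) (![0, e', 0] i) x := by
  fin_cases i
  exacts [hasDerivAt_const x 1, he, hasDerivAt_const x 1]

def planeWavePhase (k Λ : ℝ) (p : ℝ × ℝ) : ℂ := cexp (-I * ↑(k * p.1 - Λ * p.2))

section PlaneWavePhase

variable (k Λ : ℝ)

theorem norm_planeWavePhase (p : ℝ × ℝ) : ‖planeWavePhase k Λ p‖ = 1 := by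
  simp [planeWavePhase, Complex.norm_exp]

theorem hasDerivAt_planeWavePhase_fst (x t : ℝ) :
    HasDerivAt (fun s => planeWavePhase k Λ (s, t)) (-I * k * planeWavePhase k Λ (x, t)) x := by
  refine (hasDerivAt_cexp_mul_ofReal
    (((hasDerivAt_id x).const_mul k).sub_const (Λ * t)) (-I)).congr_deriv ?_
  simp [planeWavePhase]

theorem hasDerivAt_planeWavePhase_snd (x t : ℝ) :
    HasDerivAt (fun s => planeWavePhase k Λ (x, s)) (I * Λ * planeWavePhase k Λ (x, t)) t := by
  refine (hasDerivAt_cexp_mul_ofReal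
    (((hasDerivAt_id t).const_mul Λ).const_sub (k * x)) (-I)).congr_deriv ?_
  simp [planeWavePhase]

variable (a : ℝ) (p : ℝ × ℝ)

theorem pdx_planeWave : pdx (fun q => a * planeWavePhase k Λ q) p
    = -I * k * (a * planeWavePhase k Λ p) := by
  rw [pdx, ((hasDerivAt_planeWavePhase_fst k Λ p.1 p.2).const_mul (a : ℂ)).deriv]
  ring

theorem pdx_conj_planeWave : pdx (fun q => conj (a * planeWavePhase k Λ q)) p
    = I * k * conj (a * planeWavePhase k Λ p) := by
  refine ((hasDerivAt_planeWavePhase_fst k Λ p.1 p.2).const_mul (a : ℂ)).star.deriv.trans ?_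
  simp only [star_mul', star_neg, RCLike.star_def, conj_ofReal, conj_I, map_mul]
  ring

end PlaneWavePhase

theorem planeWave_eigenfunction_general (a b k Λ lam : ℝ)
    (N : ℝ × ℝ → ℝ) (hN : N = fun p => k * p.1 - Λ * p.2)
    (z : ℝ × ℝ → ℂ) (hz : z = fun p => (a : ℂ) * Complex.exp (-Complex.I * (N p : ℂ)))
    (m : ℝ × ℝ → ℝ) (hm : m = fun _ => b)
    (μ ν : ℂ) (r : Fin 3 → ℂ)
    (A₁ A₂ : Matrix (Fin 3) (Fin 3) ℂ)
    (hA₁ : A₁ = !![(lam : ℂ), 0, 1;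
                   Complex.I * a, Complex.I * k, 0;
                   (b : ℂ), (a : ℂ), -(lam : ℂ)])
    (hA₂ : A₂ = !![-(1/3) * Complex.I * (lam : ℂ) ^ 2, -Complex.I * (a : ℂ), 0;
                   (a : ℂ) * ((lam : ℂ) + Complex.I * k),
                     (2/3) * Complex.I * (lam : ℂ) ^ 2 - Complex.I * (Λ : ℂ), (a : ℂ);
                   (a : ℂ) ^ 2, (a : ℂ) * ((k : ℂ) + Complex.I * lam),
                     -(1/3) * Complex.I * (lam : ℂ) ^ 2])
    (heig₁ : A₁.mulVec r = (Complex.I * μ) • r)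
    (heig₂ : A₂.mulVec r = (Complex.I * ν) • r)
    (P : ℝ × ℝ → Matrix (Fin 3) (Fin 3) ℂ)
    (hP : P = fun p => Matrix.diagonal ![1, Complex.exp (-Complex.I * (N p : ℂ)), 1])
    (φ : ℝ × ℝ → Fin 3 → ℂ)
    (hφ : φ = fun p => Complex.exp (Complex.I * (μ * p.1 + ν * p.2)) • (P p).mulVec r) :
    ∀ p : ℝ × ℝ,
      (∀ i : Fin 3, deriv (fun s => φ (s, p.2) i) p.1 = ((LaxU lam z m p).mulVec (φ p)) i) ∧
      (∀ i : Fin 3, deriv (fun s => φ (p.1, s) i) p.2 = ((LaxV lam z p).mulVec (φ p)) i) := by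
  subst hN hz hm hA₁ hA₂ hP hφ
  rintro ⟨x, t⟩
  dsimp only
  have hE := norm_planeWavePhase k Λ (x, t)
  have gaugeU := laxU_mul_diagonal (lam := lam) (k := k)
    (z := fun q => a * planeWavePhase k Λ q) (m := fun _ => b) rfl rfl hE
  have gaugeV := laxV_mul_diagonal (lam := lam) (Λ := Λ) rfl
    (pdx_planeWave k Λ a (x, t)) (pdx_conj_planeWave k Λ a (x, t)) hE
  refine ⟨fun i => ?_, fun i => ?_⟩
  · exact (hasDerivAt_cexp_smul_diagonal_mulVec
      (((hasDerivAt_ofReal_const_mul μ x).add_const (ν * t)).const_mul I)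
      (hasDerivAt_vecCons_one (hasDerivAt_planeWavePhase_fst k Λ x t)) heig₁ gaugeU i).deriv
  · exact (hasDerivAt_cexp_smul_diagonal_mulVec
      (((hasDerivAt_ofReal_const_mul ν t).const_add (μ * x)).const_mul I)
      (hasDerivAt_vecCons_one (hasDerivAt_planeWavePhase_snd k Λ x t)) heig₂ gaugeV i).deriv

/-- The common eigenvector of the separated matrices yields an eigenfunction
`φ = exp(i(μx + νt))·P·r` of the Yajima–Oikawa Lax pair at the plane wave. -/
theorem planeWave_eigenfunction (a b k Λ lam : ℝ) (ha : 0 < a)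
    (hdisp : b + k ^ 2 + Λ = 0)
    (N : ℝ × ℝ → ℝ) (hN : N = fun p => k * p.1 - Λ * p.2)
    (z : ℝ × ℝ → ℂ) (hz : z = fun p => (a : ℂ) * Complex.exp (-Complex.I * (N p : ℂ)))
    (m : ℝ × ℝ → ℝ) (hm : m = fun _ => b)
    (μ ν : ℂ) (r : Fin 3 → ℂ) (hr : r ≠ 0)
    (A₁ A₂ : Matrix (Fin 3) (Fin 3) ℂ)
    (hA₁ : A₁ = !![(lam : ℂ), 0, 1;
                   Complex.I * a, Complex.I * k, 0;
                   (b : ℂ), (a : ℂ), -(lam : ℂ)])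
    (hA₂ : A₂ = !![-(1/3) * Complex.I * (lam : ℂ) ^ 2, -Complex.I * (a : ℂ), 0;
                   (a : ℂ) * ((lam : ℂ) + Complex.I * k),
                     (2/3) * Complex.I * (lam : ℂ) ^ 2 - Complex.I * (Λ : ℂ), (a : ℂ);
                   (a : ℂ) ^ 2, (a : ℂ) * ((k : ℂ) + Complex.I * lam),
                     -(1/3) * Complex.I * (lam : ℂ) ^ 2])
    (heig₁ : A₁.mulVec r = (Complex.I * μ) • r)
    (heig₂ : A₂.mulVec r = (Complex.I * ν) • r)
    (P : ℝ × ℝ → Matrix (Fin 3) (Fin 3) ℂ)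
    (hP : P = fun p => Matrix.diagonal ![1, Complex.exp (-Complex.I * (N p : ℂ)), 1])
    (φ : ℝ × ℝ → Fin 3 → ℂ)
    (hφ : φ = fun p => Complex.exp (Complex.I * (μ * p.1 + ν * p.2)) • (P p).mulVec r) :
    ∀ p : ℝ × ℝ,
      (∀ i : Fin 3, deriv (fun s => φ (s, p.2) i) p.1 = ((LaxU lam z m p).mulVec (φ p)) i) ∧
      (∀ i : Fin 3, deriv (fun s => φ (p.1, s) i) p.2 = ((LaxV lam z p).mulVec (φ p)) i) :=
  planeWave_eigenfunction_general a b k Λ lam N hN z hz m hm μ ν r A₁ A₂ hA₁ hA₂ heig₁ heig₂ P hP φ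
    hφ

end
end

section
/- For every λ ∈ ℂ, z ∈ ℂ and m ∈ ℝ, the matrix identity M·U·M⁻¹ = 𝐔 holds, where M = [[0, 0, 1], [0, 1, 0], [−i, 0, 0]], U = [[λ, 0, 1], [i·z, 0, 0], [m, conj(z), −λ]], and 𝐔 = [[i·ζ, A, i·B], [0, 0, −conj(A)], [−i, 0, −i·ζ]] with the substitutions ζ = i·λ, A = conj(z), B = m. In other words, the spatial Lax matrix of the Yajima–Oikawa system is gauge-equivalent by the constant matrix M to the spatial Lax matrix used by Wright. -/
/-!
`M` is the index-reversing permutation matrix with its last row scaled by `-I`, so `M A M⁻¹` is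
`A` turned by a half turn, with last row scaled by `-I` and last column by `I` (the corner they
share unchanged). For the YO matrix, `I * I = -1` and `conj (conj z) = z` then give Wright's matrix.
-/

open Matrix Complex

lemma inv_gauge_matrix :
    (!![0, 0, 1; 0, 1, 0; -I, 0, 0] : Matrix (Fin 3) (Fin 3) ℂ)⁻¹ = !![0, 0, I; 0, 1, 0; 1, 0, 0] :=
  inv_eq_left_inv <| by simp [← one_fin_three]

lemma gauge_matrix_conj (a b c d e f g h k : ℂ) :
    !![0, 0, 1; 0, 1, 0; -I, 0, 0] * !![a, b, c; d, e, f; g, h, k] *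
        (!![0, 0, 1; 0, 1, 0; -I, 0, 0] : Matrix (Fin 3) (Fin 3) ℂ)⁻¹ =
      !![k, h, I * g; f, e, I * d; -I * c, -I * b, a] := by
  rw [inv_gauge_matrix]
  simp
  exact ⟨mul_comm .., mul_comm .., by linear_combination (-a) * I_sq⟩

/-- The spatial Lax matrix of the YO system is gauge-equivalent by the constant
matrix `M` to Wright's spatial Lax matrix, under `ζ = iλ`, `A = conj z`, `B = m`. -/
theorem gauge_equivalence (lam z : ℂ) (m : ℝ)
    (M U Uw : Matrix (Fin 3) (Fin 3) ℂ)
    (hM : M = !![0, 0, 1; 0, 1, 0; -Complex.I, 0, 0])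
    (hU : U = !![lam, 0, 1;
                 Complex.I * z, 0, 0;
                 (m : ℂ), (starRingEnd ℂ) z, -lam])
    (hUw : Uw = !![Complex.I * (Complex.I * lam), (starRingEnd ℂ) z, Complex.I * (m : ℂ);
                 0, 0, -(starRingEnd ℂ) ((starRingEnd ℂ) z);
                 -Complex.I, 0, -Complex.I * (Complex.I * lam)]) :
    M * U * M⁻¹ = Uw := by
  subst hM hU hUw
  rw [gauge_matrix_conj]
  simp only [conj_conj, ← mul_assoc, I_mul_I, neg_mul, one_mul, mul_zero, mul_one, neg_neg]
end

section
/- Let m₁ < m₂ < m₃ be real numbers and set k := m₁ + m₂ + m₃. Then the following are equivalent: (i) (k − m₁)·(k − m₂)·(k − m₃) > 0 and there exists a cube root of unity ω ∈ ℂ such that exp(2·π·i·m_j) = ω·exp(2·π·i·k/3) for j = 1, 2, 3; (ii) there exist positive integers p and q such that m₁ = (−2p − q + k)/3, m₂ = (p − q + k)/3, m₃ = (p + 2q + k)/3, and either −(2p + q)/2 < k < (p − q)/2 or k > (p + 2q)/2. -/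
open Complex Real

noncomputable section

private lemma exp_two_pi_eq_iff (a b : ℝ) :
    Complex.exp (2 * Real.pi * Complex.I * a) = Complex.exp (2 * Real.pi * Complex.I * b) ↔
      ∃ n : ℤ, a = b + n := by
  rw [Complex.exp_eq_exp_iff_exists_int]
  constructor
  · rintro ⟨n, hn⟩
    refine ⟨n, ?_⟩
    have h2 : (2 * (Real.pi : ℂ) * Complex.I) ≠ 0 := by
      simp [Real.pi_ne_zero, Complex.I_ne_zero]
    have h3 : (2 * (Real.pi : ℂ) * Complex.I) * a = (2 * (Real.pi : ℂ) * Complex.I) * (b + n) := by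
      rw [hn]; ring
    have h4 := mul_left_cancel₀ h2 h3
    exact_mod_cast h4
  · rintro ⟨n, hn⟩
    refine ⟨n, ?_⟩
    have h1 : (a : ℂ) = (b : ℂ) + (n : ℂ) := by exact_mod_cast hn
    rw [h1]; ring

private lemma range_aux (p q k : ℝ) (hp : 0 < p) (hq : 0 < q) :
    0 < ((2*k + 2*p + q)/3) * ((2*k - p + q)/3) * ((2*k - p - 2*q)/3) ↔
      ((-(2*p + q) / 2 < k ∧ k < (p - q) / 2) ∨ k > (p + 2*q) / 2) := by
  constructor
  · intro h
    rcases le_or_gt (2*k - p + q) 0 with hB | hB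
    · -- middle factor ≤ 0, so smallest < 0; largest must be > 0 and middle < 0
      have hC : (2*k - p - 2*q)/3 < 0 := by linarith
      have hA : 0 < (2*k + 2*p + q)/3 := by
        by_contra hA
        push_neg at hA
        have hB' : (2*k - p + q)/3 ≤ 0 := by linarith
        have hAB : 0 ≤ ((2*k + 2*p + q)/3) * ((2*k - p + q)/3) := by nlinarith
        have : ((2*k + 2*p + q)/3) * ((2*k - p + q)/3) * ((2*k - p - 2*q)/3) ≤ 0 :=
          mul_nonpos_of_nonneg_of_nonpos hAB (le_of_lt hC)
        linarith
      rcases lt_or_eq_of_le hB with h' | h'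
      · left; constructor <;> linarith
      · exfalso
        have h0 : (2*k - p + q)/3 = 0 := by rw [h']; norm_num
        rw [h0, mul_zero, zero_mul] at h
        exact lt_irrefl 0 h
    · -- middle factor > 0, so largest > 0; smallest must be > 0
      have hA : 0 < (2*k + 2*p + q)/3 := by linarith
      have hB' : 0 < (2*k - p + q)/3 := by linarith
      have hC : 0 < (2*k - p - 2*q)/3 := by
        by_contra hC
        push_neg at hC
        have : ((2*k + 2*p + q)/3) * ((2*k - p + q)/3) * ((2*k - p - 2*q)/3) ≤ 0 :=
          mul_nonpos_of_nonneg_of_nonpos (le_of_lt (mul_pos hA hB')) hC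
        linarith
      right; linarith
  · rintro (⟨h1, h2⟩ | h)
    · have hA : 0 < (2*k + 2*p + q)/3 := by linarith
      have hB : (2*k - p + q)/3 < 0 := by linarith
      have hC : (2*k - p - 2*q)/3 < 0 := by linarith
      exact mul_pos_of_neg_of_neg (mul_neg_of_pos_of_neg hA hB) hC
    · have hA : 0 < (2*k + 2*p + q)/3 := by linarith
      have hB : 0 < (2*k - p + q)/3 := by linarith
      have hC : 0 < (2*k - p - 2*q)/3 := by linarith
      exact mul_pos (mul_pos hA hB) hC

/-- Closure lemma for transverse curves associated with plane wave solutions: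
the closure conditions hold iff the roots take the quantized form determined by
a pair of positive integers `p, q` with `k` in the admissible ranges. -/
theorem closure_condition_iff (m₁ m₂ m₃ : ℝ) (hord : m₁ < m₂ ∧ m₂ < m₃)
    (k : ℝ) (hk : k = m₁ + m₂ + m₃) :
    ((0 < (k - m₁) * (k - m₂) * (k - m₃) ∧
      ∃ ω : ℂ, ω ^ 3 = 1 ∧
        Complex.exp (2 * Real.pi * Complex.I * m₁) = ω * Complex.exp (2 * Real.pi * Complex.I * k / 3) ∧
        Complex.exp (2 * Real.pi * Complex.I * m₂) = ω * Complex.exp (2 * Real.pi * Complex.I * k / 3) ∧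
        Complex.exp (2 * Real.pi * Complex.I * m₃) = ω * Complex.exp (2 * Real.pi * Complex.I * k / 3))
      ↔
     (∃ p q : ℤ, 0 < p ∧ 0 < q ∧
        m₁ = (-2 * p - q + k) / 3 ∧
        m₂ = (p - q + k) / 3 ∧
        m₃ = (p + 2 * q + k) / 3 ∧
        ((-(2 * p + q) / 2 < k ∧ k < (p - q) / 2) ∨ k > (p + 2 * q) / 2))) := by
  obtain ⟨h12, h23⟩ := hord
  constructor
  · rintro ⟨hprod, ω, hω3, h1, h2, h3⟩
    have e21 : Complex.exp (2 * Real.pi * Complex.I * m₂) =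
        Complex.exp (2 * Real.pi * Complex.I * m₁) := h2.trans h1.symm
    have e32 : Complex.exp (2 * Real.pi * Complex.I * m₃) =
        Complex.exp (2 * Real.pi * Complex.I * m₂) := h3.trans h2.symm
    obtain ⟨p, hp⟩ := (exp_two_pi_eq_iff m₂ m₁).mp e21
    obtain ⟨q, hq⟩ := (exp_two_pi_eq_iff m₃ m₂).mp e32
    have hppos : (0 : ℤ) < p := by
      have : (0 : ℝ) < p := by linarith
      exact_mod_cast this
    have hqpos : (0 : ℤ) < q := by
      have : (0 : ℝ) < q := by linarith
      exact_mod_cast this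
    refine ⟨p, q, hppos, hqpos, by push_cast; linarith, by push_cast; linarith,
      by push_cast; linarith, ?_⟩
    have hEq1 : k - m₁ = (2*k + 2*(p:ℝ) + q)/3 := by linarith
    have hEq2 : k - m₂ = (2*k - (p:ℝ) + q)/3 := by linarith
    have hEq3 : k - m₃ = (2*k - (p:ℝ) - 2*q)/3 := by linarith
    rw [hEq1, hEq2, hEq3] at hprod
    have hpr : (0:ℝ) < (p:ℝ) := by exact_mod_cast hppos
    have hqr : (0:ℝ) < (q:ℝ) := by exact_mod_cast hqpos
    have := (range_aux (p:ℝ) (q:ℝ) k hpr hqr).mp hprod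
    push_cast
    exact this
  · rintro ⟨p, q, hp, hq, hm1, hm2, hm3, hrange⟩
    have hpr : (0:ℝ) < (p:ℝ) := by exact_mod_cast hp
    have hqr : (0:ℝ) < (q:ℝ) := by exact_mod_cast hq
    constructor
    · have hEq1 : k - m₁ = (2*k + 2*(p:ℝ) + q)/3 := by rw [hm1]; ring
      have hEq2 : k - m₂ = (2*k - (p:ℝ) + q)/3 := by rw [hm2]; ring
      have hEq3 : k - m₃ = (2*k - (p:ℝ) - 2*q)/3 := by rw [hm3]; ring
      rw [hEq1, hEq2, hEq3]
      apply (range_aux (p:ℝ) (q:ℝ) k hpr hqr).mpr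
      push_cast at hrange
      exact hrange
    · set ω : ℂ :=
        Complex.exp (2 * Real.pi * Complex.I * m₁ - 2 * Real.pi * Complex.I * k / 3) with hωdef
      have hωe : ω * Complex.exp (2 * Real.pi * Complex.I * k / 3) =
          Complex.exp (2 * Real.pi * Complex.I * m₁) := by
        rw [hωdef, ← Complex.exp_add]
        congr 1
        ring
      have e21 : Complex.exp (2 * Real.pi * Complex.I * m₂) =
          Complex.exp (2 * Real.pi * Complex.I * m₁) :=
        (exp_two_pi_eq_iff m₂ m₁).mpr ⟨p, by rw [hm1, hm2]; push_cast; ring⟩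
      have e31 : Complex.exp (2 * Real.pi * Complex.I * m₃) =
          Complex.exp (2 * Real.pi * Complex.I * m₁) :=
        (exp_two_pi_eq_iff m₃ m₁).mpr ⟨p + q, by rw [hm1, hm3]; push_cast; ring⟩
      have hω3 : ω ^ 3 = 1 := by
        rw [hωdef, ← Complex.exp_nat_mul]
        have hr : m₁ * 3 - k = ((-(2*p+q) : ℤ) : ℝ) := by rw [hm1]; push_cast; ring
        have hc : (m₁ : ℂ) * 3 - (k : ℂ) = ((-(2*p+q) : ℤ) : ℂ) := by exact_mod_cast hr
        have harg : ((3:ℕ) : ℂ) * (2 * Real.pi * Complex.I * m₁ - 2 * Real.pi * Complex.I * k / 3)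
            = ((-(2*p+q) : ℤ) : ℂ) * (2 * Real.pi * Complex.I) := by
          rw [← hc]; push_cast; ring
        rw [harg]
        exact Complex.exp_int_mul_two_pi_mul_I _
      exact ⟨ω, hω3, hωe.symm, e21.trans hωe.symm, e31.trans hωe.symm⟩

end
end

section
/- Let z : ℝ → ℂ be twice differentiable and m : ℝ → ℝ differentiable, and define f := (1/2)·(|z|²)′ − i·Im(conj(z)·z′), g := i·(z″ − m·z), h := −|z|². Then the nonstretching conditions hold: h′ = −2·Re(f) and (Im f)′ = Re(g·conj(z)). (These are the conditions for the vector field X₄ = f·Γ + g·B + h·V of the Yajima–Oikawa hierarchy to preserve the adapted natural frame along a transverse curve with complex curvature z and real invariant m.) -/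
open Complex ComplexConjugate

noncomputable section

theorem HasDerivAt.im_conj_mul {z w : ℝ → ℂ} {z' w' : ℂ} {x : ℝ}
    (hz : HasDerivAt z z' x) (hw : HasDerivAt w w' x) :
    HasDerivAt (fun y => (conj (z y) * w y).im) ((conj z' * w x + conj (z x) * w').im) x :=
  imCLM.hasFDerivAt.comp_hasDerivAt x (hz.star.mul hw)

-- `conj z' * z' = ‖z'‖ ^ 2` is real, so only `conj z * z''` contributes.
theorem deriv_im_conj_mul_deriv {z : ℝ → ℂ} {x : ℝ} (hz : DifferentiableAt ℝ z x)
    (hz' : DifferentiableAt ℝ (deriv z) x) :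
    deriv (fun y => (conj (z y) * deriv z y).im) x = (conj (z x) * deriv (deriv z) x).im := by
  rw [(hz.hasDerivAt.im_conj_mul hz'.hasDerivAt).deriv, add_im, conj_mul', ← ofReal_pow,
    ofReal_im, zero_add]

theorem X4_nonstretching_general (z : ℝ → ℂ) (m : ℝ → ℝ)
    (hz : Differentiable ℝ z) (hz2 : Differentiable ℝ (deriv z))
    (f : ℝ → ℂ) (g : ℝ → ℂ) (h : ℝ → ℝ)
    (hf : f = fun x => (1/2 : ℂ) * ((deriv (fun y => ‖z y‖ ^ 2) x : ℝ) : ℂ)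
      - Complex.I * ((((starRingEnd ℂ) (z x) * deriv z x).im : ℝ) : ℂ))
    (hg : g = fun x => Complex.I * (deriv (deriv z) x - (m x : ℂ) * z x))
    (hh : h = fun x => -‖z x‖ ^ 2) :
    (∀ x : ℝ, deriv h x = -2 * (f x).re) ∧
    (∀ x : ℝ, deriv (fun y => (f y).im) x = (g x * (starRingEnd ℂ) (z x)).re) := by
  have hf_re : ∀ x, (f x).re = deriv (fun y => ‖z y‖ ^ 2) x / 2 := fun x => by
    simp [hf, div_eq_inv_mul]
  have hf_im : (fun y => (f y).im) = fun y => -(conj (z y) * deriv z y).im := by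
    funext y
    simp [hf]
  refine ⟨fun x => ?_, fun x => ?_⟩
  · rw [hh, deriv.fun_neg, hf_re]
    ring
  · rw [hf_im, deriv.fun_neg, deriv_im_conj_mul_deriv (hz x) (hz2 x), hg]
    simp only [mul_re, mul_im, sub_re, sub_im, I_re, I_im, conj_re, conj_im, ofReal_re,
      ofReal_im]
    ring

/-- The coefficients of the fourth vector field `X₄` of the Yajima–Oikawa hierarchy
satisfy the nonstretching conditions. -/
theorem X4_nonstretching (z : ℝ → ℂ) (m : ℝ → ℝ)
    (hz : Differentiable ℝ z) (hz2 : Differentiable ℝ (deriv z))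
    (hm : Differentiable ℝ m)
    (f : ℝ → ℂ) (g : ℝ → ℂ) (h : ℝ → ℝ)
    (hf : f = fun x => (1/2 : ℂ) * ((deriv (fun y => ‖z y‖ ^ 2) x : ℝ) : ℂ)
      - Complex.I * ((((starRingEnd ℂ) (z x) * deriv z x).im : ℝ) : ℂ))
    (hg : g = fun x => Complex.I * (deriv (deriv z) x - (m x : ℂ) * z x))
    (hh : h = fun x => -‖z x‖ ^ 2) :
    (∀ x : ℝ, deriv h x = -2 * (f x).re) ∧
    (∀ x : ℝ, deriv (fun y => (f y).im) x = (g x * (starRingEnd ℂ) (z x)).re) :=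
  X4_nonstretching_general z m hz hz2 f g h hf hg hh

end
end
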